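/- arXiv:2203.14110 — 3 statements merged into one kernel-verified Lean document; each statement's English description precedes it below -/
import Mathlib

section
/- Let α : [0,∞) → [0,∞) be a class-K function (continuous, α(0)=0, strictly increasing) and let β : [t₀, t₁] → ℝ be continuously differentiable with β(t₀) ≥ 0 and β'(t) ≥ -α(max(β(t),0)) for all t ∈ [t₀,t₁]. Then β(t) ≥ 0 for all t ∈ [t₀, t₁]. -/
/-- Barrier comparison lemma with a class-K function applied to the
nonnegative part of the value. -/
theorem cbf_comparison_classK
    (α : ℝ → ℝ) (hα_cont : ContinuousOn α (Set.Ici 0))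
    (hα0 : α 0 = 0) (hα_mono : StrictMonoOn α (Set.Ici 0))
    (hα_nonneg : ∀ s, 0 ≤ s → 0 ≤ α s)
    (t₀ t₁ : ℝ) (ht : t₀ ≤ t₁)
    (β β' : ℝ → ℝ)
    (hderiv : ∀ t ∈ Set.Icc t₀ t₁, HasDerivAt β (β' t) t)
    (hβ'cont : ContinuousOn β' (Set.Icc t₀ t₁))
    (hβ0 : 0 ≤ β t₀)
    (hineq : ∀ t ∈ Set.Icc t₀ t₁, β' t ≥ -α (max (β t) 0)) :
    ∀ t ∈ Set.Icc t₀ t₁, 0 ≤ β t := by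
  by_contra h
  push_neg at h
  obtain ⟨s, hs, hβs⟩ := h
  have hβcont : ContinuousOn β (Set.Icc t₀ t₁) :=
    fun t htm => (hderiv t htm).continuousAt.continuousWithinAt
  set A : Set ℝ := {t | t ∈ Set.Icc t₀ s ∧ 0 ≤ β t} with hA
  have hIccsub : Set.Icc t₀ s ⊆ Set.Icc t₀ t₁ :=
    Set.Icc_subset_Icc le_rfl hs.2
  have hAne : A.Nonempty := ⟨t₀, ⟨le_rfl, hs.1⟩, hβ0⟩
  have hAbdd : BddAbove A := ⟨s, fun x hx => hx.1.2⟩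
  have hAclosed : IsClosed A := by
    have : A = Set.Icc t₀ s ∩ β ⁻¹' Set.Ici 0 := by
      ext x
      simp only [hA, Set.mem_setOf_eq, Set.mem_inter_iff, Set.mem_preimage, Set.mem_Ici]
    rw [this]
    exact ContinuousOn.preimage_isClosed_of_isClosed
      (hβcont.mono hIccsub) isClosed_Icc isClosed_Ici
  set c := sSup A with hc
  have hcA : c ∈ A := hAclosed.csSup_mem hAne hAbdd
  have hcs : c ≤ s := hcA.1.2
  have hct₀ : t₀ ≤ c := hcA.1.1
  have hβc : 0 ≤ β c := hcA.2
  have hcs' : c < s := by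
    rcases lt_or_eq_of_le hcs with h | h
    · exact h
    · exact absurd (h ▸ hβc) (not_le.mpr hβs)
  -- every point in (c, s] has β < 0
  have hneg : ∀ t, c < t → t ≤ s → β t < 0 := by
    intro t h1 h2
    by_contra hnn
    push_neg at hnn
    have : t ∈ A := ⟨⟨hct₀.trans h1.le, h2⟩, hnn⟩
    exact absurd (le_csSup hAbdd this) (not_le.mpr h1)
  -- β c ≤ 0 by right continuity
  have hβc0 : β c = 0 := by
    refine le_antisymm ?_ hβc
    have hcw : ContinuousWithinAt β (Set.Ioc c s) c := by
      have := (hβcont c (hIccsub hcA.1)).mono hIccsub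
      exact this.mono (fun x hx => ⟨hct₀.trans hx.1.le, hx.2⟩)
    have hne : (Set.Ioc c s).Nonempty := ⟨s, hcs', le_rfl⟩
    have hnhd : (nhdsWithin c (Set.Ioc c s)).NeBot := by
      rw [← mem_closure_iff_nhdsWithin_neBot]
      rw [closure_Ioc hcs'.ne]
      exact ⟨le_rfl, hcs'.le⟩
    refine le_of_tendsto hcw ?_
    filter_upwards [self_mem_nhdsWithin] with x hx
    exact (hneg x hx.1 hx.2).le
  -- β ≤ 0 on [c, s]
  have hle0 : ∀ t ∈ Set.Icc c s, β t ≤ 0 := by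
    intro t htm
    rcases eq_or_lt_of_le htm.1 with h | h
    · rw [← h, hβc0]
    · exact (hneg t h htm.2).le
  have hsubcs : Set.Icc c s ⊆ Set.Icc t₀ t₁ :=
    Set.Icc_subset_Icc hct₀ (hs.2)
  -- β' ≥ 0 on [c, s]
  have hd0 : ∀ t ∈ Set.Icc c s, 0 ≤ β' t := by
    intro t htm
    have h1 := hineq t (hsubcs htm)
    have : max (β t) 0 = 0 := max_eq_right (hle0 t htm)
    rw [this, hα0, neg_zero] at h1
    exact h1
  have hmono : MonotoneOn β (Set.Icc c s) := by
    apply monotoneOn_of_deriv_nonneg (convex_Icc c s)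
      (hβcont.mono hsubcs)
    · intro x hx
      rw [interior_Icc] at hx
      exact (hderiv x (hsubcs (Set.Ioo_subset_Icc_self hx))).differentiableAt.differentiableWithinAt
    · intro x hx
      rw [interior_Icc] at hx
      rw [(hderiv x (hsubcs (Set.Ioo_subset_Icc_self hx))).deriv]
      exact hd0 x (Set.Ioo_subset_Icc_self hx)
  have := hmono ⟨le_rfl, hcs'.le⟩ ⟨hcs'.le, le_rfl⟩ hcs'.le
  rw [hβc0] at this
  exact absurd this (not_le.mpr hβs)
end

section
/- Let α : ℝ → ℝ be locally Lipschitz with α(0) = 0 and α strictly increasing, and let β : [t₀, t₁] → ℝ be continuously differentiable with β(t₀) > 0 and β'(t) ≥ -α(β(t)) whenever β(t) ≥ 0. Then β(t) > 0 for all t ∈ [t₀, t₁]. -/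
/-- Strict-positivity version of the barrier comparison lemma for a locally
Lipschitz, strictly increasing α with α 0 = 0. -/
theorem cbf_comparison_strict
    (α : ℝ → ℝ) (hα_lip : LocallyLipschitz α)
    (hα0 : α 0 = 0) (hα_mono : StrictMono α)
    (t₀ t₁ : ℝ) (ht : t₀ ≤ t₁)
    (β β' : ℝ → ℝ)
    (hderiv : ∀ t ∈ Set.Icc t₀ t₁, HasDerivAt β (β' t) t)
    (hβ'cont : ContinuousOn β' (Set.Icc t₀ t₁))
    (hβ0 : 0 < β t₀)
    (hineq : ∀ t ∈ Set.Icc t₀ t₁, 0 ≤ β t → β' t ≥ -α (β t)) :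
    ∀ t ∈ Set.Icc t₀ t₁, 0 < β t := by
  have hβcont : ContinuousOn β (Set.Icc t₀ t₁) := fun t htt =>
    ((hderiv t htt).continuousAt).continuousWithinAt
  by_contra hcon
  push_neg at hcon
  obtain ⟨s, hs, hsle⟩ := hcon
  -- the set where β ≤ 0
  set A : Set ℝ := Set.Icc t₀ t₁ ∩ β ⁻¹' Set.Iic 0 with hA
  have hAne : A.Nonempty := ⟨s, hs, hsle⟩
  have hAclosed : IsClosed A :=
    hβcont.preimage_isClosed_of_isClosed isClosed_Icc isClosed_Iic
  have hAbdd : BddBelow A := ⟨t₀, fun x hx => hx.1.1⟩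
  set T := sInf A with hT
  have hTA : T ∈ A := hAclosed.csInf_mem hAne hAbdd
  have hTIcc : T ∈ Set.Icc t₀ t₁ := hTA.1
  have hTle : β T ≤ 0 := hTA.2
  have ht₀T : t₀ < T := by
    rcases lt_or_eq_of_le hTIcc.1 with h | h
    · exact h
    · exact absurd hTle (by rw [← h]; linarith)
  -- β is positive strictly before T
  have hpos : ∀ t ∈ Set.Ico t₀ T, 0 < β t := by
    intro t htt
    by_contra h
    push_neg at h
    have : t ∈ A := ⟨⟨htt.1, le_trans htt.2.le hTIcc.2⟩, h⟩
    exact absurd (csInf_le hAbdd this) (not_le.mpr htt.2)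
  -- β T = 0
  have hβT : β T = 0 := by
    have hclos : T ∈ closure (Set.Ico t₀ T) := by
      rw [closure_Ico (ne_of_lt ht₀T)]
      exact ⟨le_of_lt ht₀T, le_refl T⟩
    have htend : Filter.Tendsto β (nhdsWithin T (Set.Ico t₀ T)) (nhds (β T)) :=
      ((hderiv T hTIcc).continuousAt).continuousWithinAt
    have hne : (nhdsWithin T (Set.Ico t₀ T)).NeBot :=
      mem_closure_iff_nhdsWithin_neBot.mp hclos
    have h0 : 0 ≤ β T :=
      ge_of_tendsto htend (Filter.eventually_of_mem self_mem_nhdsWithin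
        fun x hx => (hpos x hx).le)
    linarith
  -- local Lipschitz constant at 0
  obtain ⟨K, U, hU, hKlip⟩ := hα_lip 0
  obtain ⟨ε, hε, hball⟩ := Metric.mem_nhds_iff.mp hU
  -- pick T' close to T
  have hβctT : ContinuousAt β T := (hderiv T hTIcc).continuousAt
  have : Filter.Tendsto β (nhds T) (nhds 0) := by rw [← hβT]; exact hβctT
  obtain ⟨δ, hδ, hδprop⟩ := Metric.tendsto_nhds_nhds.mp this ε hε
  set T' := max t₀ (T - δ / 2) with hT'
  have hT'lt : T' < T := max_lt ht₀T (by linarith)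
  have hT'ge : t₀ ≤ T' := le_max_left _ _
  have hT'Ico : T' ∈ Set.Ico t₀ T := ⟨hT'ge, hT'lt⟩
  have hT'pos : 0 < β T' := hpos T' hT'Ico
  -- On [T', T], 0 ≤ β t < ε
  have hsub : Set.Icc T' T ⊆ Set.Icc t₀ t₁ := fun x hx =>
    ⟨le_trans hT'ge hx.1, le_trans hx.2 hTIcc.2⟩
  have hrange : ∀ t ∈ Set.Icc T' T, 0 ≤ β t ∧ β t < ε := by
    intro t htt
    have h0 : 0 ≤ β t := by
      rcases lt_or_eq_of_le htt.2 with h | h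
      · exact (hpos t ⟨le_trans hT'ge htt.1, h⟩).le
      · rw [h, hβT]
    have hd : dist t T < δ := by
      rw [Real.dist_eq, abs_lt]
      constructor
      · have : T - δ / 2 ≤ T' := le_max_right _ _
        have := le_trans this htt.1
        linarith
      · linarith [htt.2]
    have := hδprop hd
    rw [Real.dist_eq, sub_zero, abs_lt] at this
    exact ⟨h0, this.2⟩
  -- Lipschitz bound: α (β t) ≤ K * β t on [T', T]
  have hαbound : ∀ t ∈ Set.Icc T' T, α (β t) ≤ (K : ℝ) * β t := by
    intro t htt
    obtain ⟨h0, hlt⟩ := hrange t htt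
    have hmem : β t ∈ U := hball (by
      simp [Metric.mem_ball, Real.dist_eq, abs_lt]
      constructor <;> [linarith; exact hlt])
    have h0mem : (0 : ℝ) ∈ U := hball (Metric.mem_ball_self hε)
    have := hKlip.dist_le_mul (β t) hmem 0 h0mem
    rw [Real.dist_eq, Real.dist_eq, sub_zero, hα0, sub_zero] at this
    calc α (β t) ≤ |α (β t)| := le_abs_self _
      _ ≤ (K : ℝ) * |β t| := this
      _ = (K : ℝ) * β t := by rw [abs_of_nonneg h0]
  -- the auxiliary function g t = β t * exp (K t)
  set g : ℝ → ℝ := fun t => β t * Real.exp ((K : ℝ) * t) with hg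
  have hgderiv : ∀ t ∈ Set.Icc T' T,
      HasDerivAt g (β' t * Real.exp ((K : ℝ) * t)
        + β t * (Real.exp ((K : ℝ) * t) * (K : ℝ))) t := by
    intro t htt
    have h1 : HasDerivAt (fun t : ℝ => Real.exp ((K : ℝ) * t))
        (Real.exp ((K : ℝ) * t) * (K : ℝ)) t := by
      have := ((hasDerivAt_id t).const_mul (K : ℝ)).exp
      simpa [mul_comm] using this
    exact (hderiv t (hsub htt)).mul h1
  have hgderiv_nonneg : ∀ t ∈ Set.Icc T' T,
      0 ≤ β' t * Real.exp ((K : ℝ) * t)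
        + β t * (Real.exp ((K : ℝ) * t) * (K : ℝ)) := by
    intro t htt
    have h0 := (hrange t htt).1
    have h1 := hineq t (hsub htt) h0
    have h2 := hαbound t htt
    have hexp : (0 : ℝ) < Real.exp ((K : ℝ) * t) := Real.exp_pos _
    have : β' t + (K : ℝ) * β t ≥ 0 := by linarith
    nlinarith
  have hmono : MonotoneOn g (Set.Icc T' T) := by
    apply monotoneOn_of_deriv_nonneg (convex_Icc T' T)
    · exact fun t htt => (hgderiv t htt).continuousAt.continuousWithinAt
    · intro t htt
      rw [interior_Icc] at htt
      exact (hgderiv t (Set.mem_Icc_of_Ioo htt)).differentiableAt.differentiableWithinAt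
    · intro t htt
      rw [interior_Icc] at htt
      rw [(hgderiv t (Set.mem_Icc_of_Ioo htt)).deriv]
      exact hgderiv_nonneg t (Set.mem_Icc_of_Ioo htt)
  have h1 : g T' ≤ g T :=
    hmono (Set.left_mem_Icc.mpr hT'lt.le) (Set.right_mem_Icc.mpr hT'lt.le) hT'lt.le
  have hgT : g T = 0 := by simp [hg, hβT]
  have hgT' : 0 < g T' := mul_pos hT'pos (Real.exp_pos _)
  linarith
end

section
/- More generally, for relative degree m: let β₀ = h, βₖ(t,x) = (d/dt)β_{k-1}(t,x) + αₖ(β_{k-1}(t,x)) for k = 1,...,m-1, where each αₖ : ℝ → ℝ is affine, αₖ(r) = λₖ r with λₖ > 0, and the same αₖ's are used for both h_i and h_{i+1}. If (dᵏ/dtᵏ)h_{i+1}(t_i, x) ≥ (dᵏ/dtᵏ)h_i(t_i, x) for all k = 0,1,...,m-1, then βₖ^{i+1}(t_i, x) ≥ βₖⁱ(t_i, x) for all k = 0,...,m-1. -/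
/-- The HOCBF cascade with linear class-K functions `αₖ r = λₖ r`, expressed on
the sequence of time derivatives of `h` at a point: `d j` is the `j`-th time
derivative.  Time differentiation corresponds to the shift `fun j => d (j+1)`. -/
def betaCascade (lam : ℕ → ℝ) : ℕ → (ℕ → ℝ) → ℝ
  | 0, d => d 0
  | (k + 1), d => betaCascade lam k (fun j => d (j + 1)) + lam (k + 1) * betaCascade lam k d

/-- Theorem 2 specialized to linear class-K functions: dominance of all time
derivatives up to order `m - 1` implies dominance of all cascade terms. -/
theorem hocbf_cascade_monotone (lam : ℕ → ℝ) (hlam : ∀ k, 0 < lam k)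
    (m : ℕ) (di dip : ℕ → ℝ) (hd : ∀ k < m, di k ≤ dip k) :
    ∀ k < m, betaCascade lam k di ≤ betaCascade lam k dip := by
  have key : ∀ k (d d' : ℕ → ℝ), (∀ j ≤ k, d j ≤ d' j) →
      betaCascade lam k d ≤ betaCascade lam k d' := by
    intro k
    induction k with
    | zero => intro d d' h; simpa [betaCascade] using h 0 le_rfl
    | succ k ih =>
      intro d d' h
      simp only [betaCascade]
      have h1 : betaCascade lam k (fun j => d (j + 1)) ≤
          betaCascade lam k (fun j => d' (j + 1)) :=
        ih _ _ (fun j hj => h (j + 1) (by omega))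
      have h2 : betaCascade lam k d ≤ betaCascade lam k d' :=
        ih _ _ (fun j hj => h j (by omega))
      have := mul_le_mul_of_nonneg_left h2 (hlam (k + 1)).le
      linarith
  intro k hk
  exact key k di dip (fun j hj => hd j (lt_of_le_of_lt hj hk))
end
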